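/- arXiv:1312.7646 — 3 statements merged into one kernel-verified Lean document; each statement's English description precedes it below -/
import Mathlib

section
/- For nonnegative integers k, ℓ, n with ℓ ≤ n and k ≤ n, the sum ∑_{p=0}^{ℓ} C(k,p) · 3^p · C(n-k, ℓ-p) is at most (ℓ+1) · 3^{λℓ+1} · C(n,ℓ), where λ = 3k/(n+2k). -/
/-!
The sum `S` is the part of the expansion of `(3x + y) ^ k (x + y) ^ (n - k)` whose monomials are
`x ^ ℓ y ^ (n - ℓ)`, and by weighted AM-GM that product is at most `(y + (n + 2k) x / n) ^ n`.
For `y = n - ℓ` and `x = n ℓ / (n + 2k)` the latter is `n ^ n = (ℓ + (n - ℓ)) ^ n`, which is at most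
`2ℓ + 1` times its largest binomial term `C(n, ℓ) ℓ ^ ℓ (n - ℓ) ^ (n - ℓ)`: the terms increase up
to index `ℓ` and then decay geometrically with ratio `ℓ / (ℓ + 1)`. This gives
`S ≤ (2ℓ + 1) C(n, ℓ) ((n + 2k) / n) ^ ℓ`, and `(n + 2k) / n ≤ 3 ^ λ` is weighted AM-GM again,
for the points `1` and `1 / 3`.
-/

open Finset Real

section Binomial

variable {R : Type*} [CommSemiring R] [PartialOrder R] [IsOrderedRing R] {x y : R}

theorem sum_range_choose_mul_pow_le_add_pow (hx : 0 ≤ x) (hy : 0 ≤ y) (m N : ℕ) :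
    ∑ q ∈ range N, (m.choose q : R) * x ^ q * y ^ (m - q) ≤ (x + y) ^ m := by
  have hvanish : ∀ q ≥ m + 1, (m.choose q : R) * x ^ q * y ^ (m - q) = 0 := fun q hq => by
    rw [Nat.choose_eq_zero_of_lt hq, Nat.cast_zero, zero_mul, zero_mul]
  calc ∑ q ∈ range N, (m.choose q : R) * x ^ q * y ^ (m - q)
      ≤ ∑ q ∈ range (max N (m + 1)), (m.choose q : R) * x ^ q * y ^ (m - q) :=
        sum_le_sum_of_subset_of_nonneg (range_subset_range.2 (le_max_left _ _))
          fun _ _ _ => by positivity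
    _ = ∑ q ∈ range (m + 1), (m.choose q : R) * x ^ q * y ^ (m - q) :=
        eventually_constant_sum hvanish (le_max_right _ _)
    _ = (x + y) ^ m := by
        rw [add_pow]
        exact sum_congr rfl fun q _ => by ring

theorem choose_mul_pow_le_add_pow (hx : 0 ≤ x) (hy : 0 ≤ y) (m q : ℕ) :
    (m.choose q : R) * x ^ q * y ^ (m - q) ≤ (x + y) ^ m :=
  (single_le_sum (f := fun q => (m.choose q : R) * x ^ q * y ^ (m - q))
    (fun _ _ => by positivity) (self_mem_range_succ q)).trans
    (sum_range_choose_mul_pow_le_add_pow hx hy m (q + 1))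

theorem sum_choose_mul_pow_mul_choose_mul_pow_le {u v : R} (hu : 0 ≤ u) (hv : 0 ≤ v)
    (hy : 0 ≤ y) (k m ℓ : ℕ) :
    ∑ p ∈ range (ℓ + 1), (k.choose p : R) * u ^ p * ((m.choose (ℓ - p) : R) * v ^ (ℓ - p)) *
      y ^ (k + m - ℓ) ≤ (u + y) ^ k * (v + y) ^ m := by
  have hterm : ∀ p ∈ range (ℓ + 1),
      (k.choose p : R) * u ^ p * ((m.choose (ℓ - p) : R) * v ^ (ℓ - p)) * y ^ (k + m - ℓ) =
        ((k.choose p : R) * u ^ p * y ^ (k - p)) *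
          ((m.choose (ℓ - p) : R) * v ^ (ℓ - p) * y ^ (m - (ℓ - p))) := by
    intro p hp
    have hpℓ : p ≤ ℓ := Nat.lt_succ_iff.1 (mem_range.1 hp)
    by_cases hpk : p ≤ k
    · by_cases hpm : ℓ - p ≤ m
      · rw [show k + m - ℓ = (k - p) + (m - (ℓ - p)) by omega, pow_add]
        ring
      · rw [Nat.choose_eq_zero_of_lt (not_le.1 hpm)]
        simp
    · rw [Nat.choose_eq_zero_of_lt (not_le.1 hpk)]
      simp
  rw [sum_congr rfl hterm]
  calc ∑ p ∈ range (ℓ + 1), ((k.choose p : R) * u ^ p * y ^ (k - p)) *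
          ((m.choose (ℓ - p) : R) * v ^ (ℓ - p) * y ^ (m - (ℓ - p)))
      ≤ ∑ p ∈ range (ℓ + 1), ((k.choose p : R) * u ^ p * y ^ (k - p)) * (v + y) ^ m :=
        sum_le_sum fun p _ => mul_le_mul_of_nonneg_left
          (choose_mul_pow_le_add_pow hv hy m (ℓ - p)) (by positivity)
    _ = (∑ p ∈ range (ℓ + 1), (k.choose p : R) * u ^ p * y ^ (k - p)) * (v + y) ^ m :=
        (sum_mul ..).symm
    _ ≤ (u + y) ^ k * (v + y) ^ m := by
        gcongr
        exact sum_range_choose_mul_pow_le_add_pow hu hy k (ℓ + 1)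

end Binomial

theorem sum_range_le_of_unimodal (b : ℕ → ℕ) (ℓ : ℕ) (hup : ∀ j < ℓ, b j ≤ b (j + 1))
    (hdown : ∀ j ≥ ℓ, (ℓ + 1) * b (j + 1) ≤ ℓ * b j) (N : ℕ) :
    ∑ j ∈ range N, b j ≤ (2 * ℓ + 1) * b ℓ := by
  have hfront : ∀ j ≤ ℓ, b j ≤ b ℓ := fun j hj =>
    Nat.decreasingInduction (motive := fun i _ => b i ≤ b ℓ)
      (fun i hi ih => (hup i hi).trans ih) le_rfl hj
  -- Each tail term b (j + 1) is at most ℓ * (b j - b (j + 1)), so the tail telescopes.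
  have htail : ∀ M, ∑ i ∈ range M, b (ℓ + 1 + i) + ℓ * b (ℓ + M) ≤ ℓ * b ℓ := by
    intro M
    induction M with
    | zero => simp
    | succ M ih =>
      have := hdown (ℓ + M) (Nat.le_add_right ℓ M)
      rw [sum_range_succ, ← add_assoc ℓ M 1, show ℓ + 1 + M = ℓ + M + 1 by omega]
      linarith
  calc ∑ j ∈ range N, b j ≤ ∑ j ∈ range (ℓ + 1 + N), b j :=
        sum_le_sum_of_subset (range_subset_range.2 (by omega))
    _ = ∑ j ∈ range ℓ, b j + b ℓ + ∑ i ∈ range N, b (ℓ + 1 + i) := by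
        rw [sum_range_add, sum_range_succ]
    _ ≤ ℓ * b ℓ + b ℓ + ℓ * b ℓ := by
        gcongr
        · simpa using sum_le_sum fun j hj => hfront j (mem_range.1 hj).le
        · exact le_of_add_le_left (htail N)
    _ = (2 * ℓ + 1) * b ℓ := by ring

namespace Nat

theorem choose_mul_sub_le_choose_succ_mul {n j ℓ : ℕ} (hj : j < ℓ) :
    n.choose j * (n - ℓ) ≤ n.choose (j + 1) * ℓ := by
  refine Nat.le_of_mul_le_mul_right ?_ j.succ_pos
  calc n.choose j * (n - ℓ) * (j + 1) ≤ n.choose j * (n - j) * ℓ := by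
        rw [mul_assoc, mul_assoc]
        exact Nat.mul_le_mul_left _ (Nat.mul_le_mul (by omega) hj)
    _ = n.choose (j + 1) * ℓ * (j + 1) := by
        rw [← choose_succ_right_eq]
        ring

theorem choose_succ_mul_succ_le_choose_mul_sub {n j ℓ : ℕ} (hj : ℓ ≤ j) :
    n.choose (j + 1) * (ℓ + 1) ≤ n.choose j * (n - ℓ) :=
  calc n.choose (j + 1) * (ℓ + 1) ≤ n.choose (j + 1) * (j + 1) := by gcongr
    _ = n.choose j * (n - j) := choose_succ_right_eq n j
    _ ≤ n.choose j * (n - ℓ) := by gcongr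

theorem pow_self_le_choose_mul {n ℓ : ℕ} (hℓ : ℓ ≤ n) :
    n ^ n ≤ (2 * ℓ + 1) * (n.choose ℓ * ℓ ^ ℓ * (n - ℓ) ^ (n - ℓ)) := by
  set b : ℕ → ℕ := fun j => n.choose j * ℓ ^ j * (n - ℓ) ^ (n - j)
  have hsum : n ^ n = ∑ j ∈ range (n + 1), b j :=
    calc n ^ n = (ℓ + (n - ℓ)) ^ n := by rw [Nat.add_sub_cancel' hℓ]
      _ = ∑ j ∈ range (n + 1), b j := by
          rw [add_pow]
          exact sum_congr rfl fun j _ => by simp only [b, Nat.cast_id]; ring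
  have hup : ∀ j < ℓ, b j ≤ b (j + 1) := fun j hj =>
    calc b j = n.choose j * (n - ℓ) * (ℓ ^ j * (n - ℓ) ^ (n - (j + 1))) := by
          simp only [b, show n - j = n - (j + 1) + 1 by omega]
          ring
      _ ≤ n.choose (j + 1) * ℓ * (ℓ ^ j * (n - ℓ) ^ (n - (j + 1))) :=
          Nat.mul_le_mul_right _ (choose_mul_sub_le_choose_succ_mul hj)
      _ = b (j + 1) := by
          simp only [b]
          ring
  have hdown : ∀ j ≥ ℓ, (ℓ + 1) * b (j + 1) ≤ ℓ * b j := by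
    intro j hj
    rcases lt_or_ge j n with hjn | hnj
    · calc (ℓ + 1) * b (j + 1)
            = n.choose (j + 1) * (ℓ + 1) * (ℓ ^ (j + 1) * (n - ℓ) ^ (n - (j + 1))) := by
            simp only [b]
            ring
        _ ≤ n.choose j * (n - ℓ) * (ℓ ^ (j + 1) * (n - ℓ) ^ (n - (j + 1))) :=
            Nat.mul_le_mul_right _ (choose_succ_mul_succ_le_choose_mul_sub hj)
        _ = ℓ * b j := by
            simp only [b, show n - j = n - (j + 1) + 1 by omega]
            ring
    · simp [b, Nat.choose_eq_zero_of_lt (Nat.lt_succ_of_le hnj)]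
  rw [hsum]
  exact sum_range_le_of_unimodal b ℓ hup hdown (n + 1)

end Nat

theorem pow_mul_pow_le_weighted_mean_pow {a b : ℝ} (ha : 0 ≤ a) (hb : 0 ≤ b) {k n : ℕ}
    (hk : k ≤ n) : a ^ k * b ^ (n - k) ≤ ((k * a + (n - k) * b) / n) ^ n := by
  obtain rfl | hn := n.eq_zero_or_pos
  · simp [Nat.le_zero.1 hk]
  have hn' : (0 : ℝ) < n := Nat.cast_pos.2 hn
  have hkn : (k : ℝ) ≤ n := Nat.cast_le.2 hk
  have hmean := geom_mean_le_arith_mean2_weighted (div_nonneg k.cast_nonneg hn'.le)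
    (div_nonneg (sub_nonneg.2 hkn) hn'.le) ha hb (by field_simp; ring)
  calc a ^ k * b ^ (n - k)
      = (a ^ ((k : ℝ) / n) * b ^ (((n : ℝ) - k) / n)) ^ n := by
        rw [mul_pow, ← rpow_natCast _ n, ← rpow_natCast _ n, ← rpow_mul ha, ← rpow_mul hb,
          div_mul_cancel₀ _ hn'.ne', div_mul_cancel₀ _ hn'.ne', ← Nat.cast_sub hk,
          rpow_natCast, rpow_natCast]
    _ ≤ (k / n * a + (n - k) / n * b) ^ n := by gcongr
    _ = ((k * a + (n - k) * b) / n) ^ n := by ring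

theorem add_two_mul_div_le_three_rpow {a b : ℝ} (hb : 0 ≤ b) (hba : b ≤ a) :
    (a + 2 * b) / a ≤ 3 ^ (3 * b / (a + 2 * b)) := by
  obtain ha | ha := (hb.trans hba).eq_or_lt
  · rw [← ha, div_zero]
    positivity
  have hc : 0 < a + 2 * b := by linarith
  have hmean := geom_mean_le_arith_mean2_weighted (w₁ := (a - b) / (a + 2 * b))
    (w₂ := 3 * b / (a + 2 * b)) (p₁ := 1) (p₂ := 3⁻¹)
    (div_nonneg (sub_nonneg.2 hba) hc.le) (by positivity) zero_le_one
    (by norm_num) (by field_simp; ring)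
  rw [one_rpow, one_mul, inv_rpow (by norm_num)] at hmean
  rw [← inv_div, inv_le_comm₀ (by positivity) (by positivity)]
  calc (3 ^ (3 * b / (a + 2 * b)))⁻¹ ≤ _ := hmean
    _ = a / (a + 2 * b) := by field_simp; ring

theorem sum_choose_mul_three_pow_mul_choose_le {n k ℓ : ℕ} (hℓ : ℓ ≤ n) (hk : k ≤ n)
    (hn : 0 < n) :
    ∑ p ∈ range (ℓ + 1), (k.choose p : ℝ) * 3 ^ p * ((n - k).choose (ℓ - p) : ℝ) ≤
      (2 * ℓ + 1) * n.choose ℓ * (((n : ℝ) + 2 * k) / n) ^ ℓ := by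
  set S := ∑ p ∈ range (ℓ + 1), (k.choose p : ℝ) * 3 ^ p * ((n - k).choose (ℓ - p) : ℝ)
  have hpeak :
      (n : ℝ) ^ n ≤ (2 * ℓ + 1) * (n.choose ℓ * ℓ ^ ℓ * ((n - ℓ : ℕ) : ℝ) ^ (n - ℓ)) := by
    exact_mod_cast Nat.pow_self_le_choose_mul hℓ
  have hpos : (0 : ℝ) < ℓ ^ ℓ * ((n - ℓ : ℕ) : ℝ) ^ (n - ℓ) := by
    exact_mod_cast Nat.mul_pos Nat.pow_self_pos Nat.pow_self_pos
  set c : ℝ := n + 2 * k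
  have hn' : (0 : ℝ) < n := Nat.cast_pos.2 hn
  have hc : 0 < c := by positivity
  -- chosen so that `3x + y` and `x + y` have weighted mean `n`, and `x ^ ℓ y ^ (n - ℓ)` is
  -- `(n / c) ^ ℓ` times the peak term `ℓ ^ ℓ (n - ℓ) ^ (n - ℓ)`
  set x : ℝ := n * ℓ / c
  set y : ℝ := ((n - ℓ : ℕ) : ℝ) with hy
  have hx : 0 ≤ x := by positivity
  have hcoef : S * x ^ ℓ * y ^ (n - ℓ) ≤ (3 * x + y) ^ k * (x + y) ^ (n - k) := by
    have h := sum_choose_mul_pow_mul_choose_mul_pow_le (u := 3 * x) (y := y) (by positivity) hx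
      (Nat.cast_nonneg _) k (n - k) ℓ
    rw [Nat.add_sub_cancel' hk] at h
    refine le_trans (le_of_eq ?_) h
    rw [sum_mul, sum_mul]
    refine sum_congr rfl fun p hp => ?_
    rw [← pow_mul_pow_sub x (Nat.lt_succ_iff.1 (mem_range.1 hp))]
    ring
  have hmean : (3 * x + y) ^ k * (x + y) ^ (n - k) ≤ (n : ℝ) ^ n := by
    have h := pow_mul_pow_le_weighted_mean_pow (a := 3 * x + y) (b := x + y) (by positivity)
      (by positivity) hk
    have hcentre : (k * (3 * x + y) + (n - k) * (x + y)) / n = (n : ℝ) := by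
      simp only [x, hy, c, Nat.cast_sub hℓ]
      field_simp
      ring
    rwa [hcentre] at h
  have hscaled : S * ((n : ℝ) / c) ^ ℓ ≤ (2 * ℓ + 1) * n.choose ℓ := by
    refine le_of_mul_le_mul_right ?_ hpos
    calc S * ((n : ℝ) / c) ^ ℓ * (ℓ ^ ℓ * y ^ (n - ℓ)) = S * x ^ ℓ * y ^ (n - ℓ) := by
          simp only [x]
          ring
      _ ≤ (2 * ℓ + 1) * n.choose ℓ * (ℓ ^ ℓ * y ^ (n - ℓ)) := by
          linarith
  calc S = S * ((n : ℝ) / c) ^ ℓ * (c / n) ^ ℓ := by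
        rw [mul_assoc, ← mul_pow, div_mul_div_comm, mul_comm (n : ℝ) c,
          div_self (mul_pos hc hn').ne', one_pow, mul_one]
    _ ≤ (2 * ℓ + 1) * n.choose ℓ * (c / n) ^ ℓ := by gcongr

/-- For `ℓ ≤ n`, `k ≤ n` and `n + 2k > 0`, with `λ = 3k/(n+2k)`,
`∑_{p=0}^{ℓ} C(k,p) 3^p C(n-k, ℓ-p) ≤ (ℓ+1) · 3^{λℓ+1} · C(n,ℓ)`. -/
theorem sum_binom_three_pow_le (n k ℓ : ℕ) (hℓ : ℓ ≤ n) (hk : k ≤ n)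
    (hpos : 0 < n + 2 * k) :
    (∑ p ∈ Finset.range (ℓ + 1),
        (k.choose p : ℝ) * 3 ^ p * ((n - k).choose (ℓ - p) : ℝ)) ≤
      ((ℓ : ℝ) + 1) *
        (3 : ℝ) ^ ((3 * (k : ℝ) / ((n : ℝ) + 2 * k)) * (ℓ : ℝ) + 1) *
        (n.choose ℓ : ℝ) := by
  have hn : 0 < n := by omega
  have hbase : ((n : ℝ) + 2 * k) / n ≤ 3 ^ (3 * (k : ℝ) / ((n : ℝ) + 2 * k)) :=
    add_two_mul_div_le_three_rpow k.cast_nonneg (Nat.cast_le.2 hk)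
  calc _ ≤ (2 * ℓ + 1) * n.choose ℓ * (((n : ℝ) + 2 * k) / n) ^ ℓ :=
        sum_choose_mul_three_pow_mul_choose_le hℓ hk hn
    _ ≤ 3 * (ℓ + 1) * n.choose ℓ * ((3 : ℝ) ^ (3 * (k : ℝ) / ((n : ℝ) + 2 * k))) ^ ℓ := by
        gcongr
        linarith
    _ = _ := by
        rw [rpow_add three_pos, rpow_one, ← rpow_natCast, ← rpow_mul zero_le_three]
        ring
end

section
/- The distribution π(m) = C(n,m) · 3^m / (4^n - 1) on {1,...,n} is a stationary distribution of the Markov chain with transition matrix P given by P(ℓ,ℓ-1) = 2ℓ(ℓ-1)/(5n(n-1)), P(ℓ,ℓ+1) = 6ℓ(n-ℓ)/(5n(n-1)), P(ℓ,ℓ) = 1 - 2ℓ(3n-2ℓ-1)/(5n(n-1)), and 0 otherwise; that is, ∑_{ℓ=1}^n π(ℓ) P(ℓ,m) = π(m) for all 1 ≤ m ≤ n. -/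
open Finset

/-- The transition matrix of the weight Markov chain of the random circuit. -/
noncomputable def weightP (n ℓ m : ℕ) : ℝ :=
  if m = ℓ then 1 - 2 * ℓ * (3 * n - 2 * ℓ - 1) / (5 * n * (n - 1))
  else if m + 1 = ℓ then 2 * ℓ * (ℓ - 1) / (5 * n * (n - 1))
  else if m = ℓ + 1 then 6 * ℓ * (n - ℓ) / (5 * n * (n - 1))
  else 0

/-- The stationary distribution `π(m) = C(n,m) 3^m / (4^n - 1)`. -/
noncomputable def weightPi (n m : ℕ) : ℝ := (n.choose m : ℝ) * 3 ^ m / (4 ^ n - 1)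

/-!
The chain only moves between neighbouring states, so it is reversible as soon as detailed balance
`π(ℓ) P(ℓ, ℓ+1) = π(ℓ+1) P(ℓ+1, ℓ)` holds; this reduces to `3 · 2 (ℓ+1) C(n, ℓ+1) = 6 (n-ℓ) C(n, ℓ)`.
A reversible distribution is stationary because the rows of `P` sum to `1`.
-/

section DetailedBalance

variable {ι R : Type*} [CommSemiring R]

theorem sum_mul_eq_of_detailed_balance {s : Finset ι} {π : ι → R} {P : ι → ι → R}
    (hbal : ∀ a ∈ s, ∀ b ∈ s, π a * P a b = π b * P b a)
    (hrow : ∀ a ∈ s, ∑ b ∈ s, P a b = 1) {m : ι} (hm : m ∈ s) :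
    ∑ ℓ ∈ s, π ℓ * P ℓ m = π m :=
  calc ∑ ℓ ∈ s, π ℓ * P ℓ m = ∑ ℓ ∈ s, π m * P m ℓ :=
        sum_congr rfl fun ℓ hℓ => hbal ℓ hℓ m hm
    _ = π m := by rw [← mul_sum, hrow m hm, mul_one]

def IsBirthDeath (P : ℕ → ℕ → R) : Prop :=
  ∀ ℓ m, ℓ + 1 < m ∨ m + 1 < ℓ → P ℓ m = 0

theorem IsBirthDeath.detailed_balance {P : ℕ → ℕ → R} (hP : IsBirthDeath P) {π : ℕ → R}
    (hadj : ∀ ℓ, π ℓ * P ℓ (ℓ + 1) = π (ℓ + 1) * P (ℓ + 1) ℓ) (a b : ℕ) :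
    π a * P a b = π b * P b a := by
  wlog hab : a ≤ b generalizing a b
  · exact (this b a (by omega)).symm
  obtain rfl | rfl | hlt : b = a ∨ b = a + 1 ∨ a + 1 < b := by omega
  · rfl
  · exact hadj a
  · rw [hP a b (Or.inl hlt), hP b a (Or.inr hlt), mul_zero, mul_zero]

theorem IsBirthDeath.sum_Icc_one {P : ℕ → ℕ → R} (hP : IsBirthDeath P) {n ℓ : ℕ}
    (hℓ : ℓ ∈ Icc 1 n) (h_zero : P ℓ 0 = 0) (h_top : P ℓ (n + 1) = 0) :
    ∑ m ∈ Icc 1 n, P ℓ m = P ℓ (ℓ - 1) + P ℓ ℓ + P ℓ (ℓ + 1) := by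
  obtain ⟨k, rfl⟩ : ∃ k, ℓ = k + 1 := ⟨ℓ - 1, by simp only [mem_Icc] at hℓ; omega⟩
  simp only [mem_Icc] at hℓ
  have h_ext : ∑ m ∈ Icc 1 n, P (k + 1) m = ∑ m ∈ Icc 0 (n + 1), P (k + 1) m := by
    refine sum_subset (Icc_subset_Icc (Nat.zero_le _) (Nat.le_succ _)) fun m hm hm' => ?_
    simp only [mem_Icc] at hm hm'
    obtain rfl | rfl : m = 0 ∨ m = n + 1 := by omega
    exacts [h_zero, h_top]
  have h_nbhd : ∑ m ∈ {k, k + 1, k + 2}, P (k + 1) m = ∑ m ∈ Icc 0 (n + 1), P (k + 1) m := by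
    refine sum_subset (fun m hm => ?_) fun m _ hm => hP _ _ ?_
    · simp only [mem_insert, mem_singleton, mem_Icc] at hm ⊢
      omega
    · simp only [mem_insert, mem_singleton] at hm
      omega
  rw [h_ext, ← h_nbhd, sum_insert (by simp), sum_insert (by simp), sum_singleton,
    Nat.add_sub_cancel, add_assoc]

end DetailedBalance

theorem Nat.cast_choose_succ_mul {R : Type*} [CommRing R] (n k : ℕ) :
    (n.choose (k + 1) : R) * (k + 1) = n.choose k * (n - k) := by
  rcases le_or_gt k n with hkn | hnk
  · have h := congrArg (Nat.cast : ℕ → R) (Nat.choose_succ_right_eq n k)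
    push_cast [Nat.cast_sub hkn] at h
    exact h
  · simp [Nat.choose_eq_zero_of_lt hnk, Nat.choose_eq_zero_of_lt (Nat.lt_succ_of_lt hnk)]

theorem weightP_isBirthDeath (n : ℕ) : IsBirthDeath (weightP n) := fun ℓ m h => by
  rw [weightP, if_neg (by omega), if_neg (by omega), if_neg (by omega)]

theorem weightP_up (n ℓ : ℕ) :
    weightP n ℓ (ℓ + 1) = 6 * ℓ * (n - ℓ) / (5 * n * (n - 1)) := by
  rw [weightP, if_neg (by omega), if_neg (by omega), if_pos rfl]

theorem weightP_down (n ℓ : ℕ) :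
    weightP n (ℓ + 1) ℓ = 2 * (ℓ + 1) * ℓ / (5 * n * (n - 1)) := by
  rw [weightP, if_neg (by omega), if_pos rfl]
  push_cast
  ring

theorem weightPi_detailed_balance (n a b : ℕ) :
    weightPi n a * weightP n a b = weightPi n b * weightP n b a := by
  refine (weightP_isBirthDeath n).detailed_balance (fun ℓ => ?_) a b
  rw [weightP_up, weightP_down, weightPi, weightPi]
  linear_combination (-(6 * 3 ^ ℓ * ℓ * (4 ^ n - 1)⁻¹ * (5 * n * (n - 1 : ℝ))⁻¹)) *
    Nat.cast_choose_succ_mul (R := ℝ) n ℓ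

theorem sum_weightP {n ℓ : ℕ} (hℓ : ℓ ∈ Icc 1 n) : ∑ m ∈ Icc 1 n, weightP n ℓ m = 1 := by
  have h_zero : weightP n ℓ 0 = 0 := by
    simp only [mem_Icc] at hℓ
    obtain rfl | h : ℓ = 1 ∨ 1 < ℓ := by omega
    · simpa using weightP_down n 0
    · exact weightP_isBirthDeath n ℓ 0 (Or.inr h)
  have h_top : weightP n ℓ (n + 1) = 0 := by
    simp only [mem_Icc] at hℓ
    obtain rfl | h : ℓ = n ∨ ℓ < n := by omega
    · simp [weightP_up]
    · exact weightP_isBirthDeath n ℓ (n + 1) (Or.inl (by omega))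
  obtain ⟨k, rfl⟩ : ∃ k, ℓ = k + 1 := ⟨ℓ - 1, by simp only [mem_Icc] at hℓ; omega⟩
  rw [(weightP_isBirthDeath n).sum_Icc_one hℓ h_zero h_top, Nat.add_sub_cancel, weightP_down,
    weightP_up, weightP, if_pos rfl]
  push_cast
  ring

theorem weightPi_stationary_general (n : ℕ) :
    ∀ m ∈ Finset.Icc 1 n,
      ∑ ℓ ∈ Finset.Icc 1 n, weightPi n ℓ * weightP n ℓ m = weightPi n m :=
  fun _ hm => sum_mul_eq_of_detailed_balance (fun a _ b _ => weightPi_detailed_balance n a b)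
    (fun _ hℓ => sum_weightP hℓ) hm

/-- `π` is a stationary distribution of the Markov chain `P`:
`∑_{ℓ=1}^n π(ℓ) P(ℓ,m) = π(m)` for all `1 ≤ m ≤ n`. -/
theorem weightPi_stationary (n : ℕ) (hn : 2 ≤ n) :
    ∀ m ∈ Finset.Icc 1 n,
      ∑ ℓ ∈ Finset.Icc 1 n, weightPi n ℓ * weightP n ℓ m = weightPi n m :=
  weightPi_stationary_general n
end

section
/- Let U ∈ C_n (the n-qubit Clifford group) and suppose for all ν_A ∈ {0,1,2,3}^k \ {0}, ν_B ∈ {0,3}^{n-k}, and all μ with 1 ≤ w(μ) ≤ d, tr[σ_μ U (σ_{ν_A} ⊗ σ_{ν_B}) U†] = 0. Then the code with basis |x̄⟩ = U(|x⟩ ⊗ |0⟩^{⊗n-k}) satisfies ⟨x̄| σ_μ |ȳ⟩ = C_μ δ_{xy} for all x, y ∈ {0,1}^k and all μ with 1 ≤ w(μ) ≤ d, where C_μ = 2^{-k} tr[σ_μ U (I ⊗ |0⟩⟨0|^{⊗n-k}) U†]. -/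
open Matrix BigOperators Finset

/-- The four `2×2` Pauli matrices: `I, X, Y, Z`. -/
noncomputable def pauli : Fin 4 → Matrix (Fin 2) (Fin 2) ℂ
  | 0 => !![1, 0; 0, 1]
  | 1 => !![0, 1; 1, 0]
  | 2 => !![0, -Complex.I; Complex.I, 0]
  | 3 => !![1, 0; 0, -1]

/-- The Pauli operator `σ_ν = σ_{ν_1} ⊗ ⋯ ⊗ σ_{ν_n}` on the qubits indexed by `ι`. -/
noncomputable def pauliString {ι : Type*} [Fintype ι] (ν : ι → Fin 4) :
    Matrix (ι → Fin 2) (ι → Fin 2) ℂ :=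
  fun x y => ∏ i, pauli (ν i) (x i) (y i)

/-- The weight of a Pauli string: the number of nonidentity tensor factors. -/
def pWeight {ι : Type*} [Fintype ι] [DecidableEq ι] (ν : ι → Fin 4) : ℕ :=
  (Finset.univ.filter fun i => ν i ≠ 0).card

variable {k m : ℕ}

/-- The vector `|x⟩_A ⊗ |0⟩_B` on the `k + m` qubits `Fin k ⊕ Fin m`. -/
noncomputable def ketX0 (x : Fin k → Fin 2) : (Fin k ⊕ Fin m → Fin 2) → ℂ :=
  fun z => if (∀ i, z (Sum.inl i) = x i) ∧ (∀ j : Fin m, z (Sum.inr j) = 0) then 1 else 0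

/-- The code state `|x̄⟩ = U (|x⟩ ⊗ |0⟩^{⊗ m})`. -/
noncomputable def codeState (U : Matrix (Fin k ⊕ Fin m → Fin 2) (Fin k ⊕ Fin m → Fin 2) ℂ)
    (x : Fin k → Fin 2) : (Fin k ⊕ Fin m → Fin 2) → ℂ :=
  U.mulVec (ketX0 x)

/-- The operator `I_A ⊗ |0⟩⟨0|_B^{⊗ m}`. -/
noncomputable def idProjZero :
    Matrix (Fin k ⊕ Fin m → Fin 2) (Fin k ⊕ Fin m → Fin 2) ℂ :=
  fun z w => if (∀ i, z (Sum.inl i) = w (Sum.inl i)) ∧ (∀ j : Fin m, z (Sum.inr j) = 0) ∧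
      (∀ j : Fin m, w (Sum.inr j) = 0) then 1 else 0

/-! Pauli strings form an orthogonal basis, `2ⁿ M = ∑_ν tr(M σ_ν) σ_ν`. Apply this to
`M = U† σ_μ U` and take the entry between `|x, 0⟩` and `|y, 0⟩`: the `σ_ν` with an `X` or `Y`
factor on `B` vanish there, those with `ν_A ≠ 0` and `ν_B ∈ {0,3}^m` have zero coefficient by
hypothesis, and those with `ν_A = 0` contribute `δ_{xy}` times a number independent of `x`.
Hence `M` compressed to the code space is a scalar `c`, and taking the trace against
`I ⊗ |0⟩⟨0|` gives `c = 2^{-k} tr[σ_μ U (I ⊗ |0⟩⟨0|) U†]`. -/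

lemma trace_mul_cycle_four {n R : Type*} [Fintype n] [NonUnitalCommSemiring R]
    (P U A V : Matrix n n R) : (P * (U * A * V)).trace = (V * P * U * A).trace := by
  rw [← Matrix.mul_assoc, trace_mul_comm]
  simp only [Matrix.mul_assoc]

lemma pauli_zero : pauli 0 = 1 := by
  ext p q; fin_cases p <;> fin_cases q <;> rfl

lemma pauli_apply_zero_zero_eq_zero {a : Fin 4} (h0 : a ≠ 0) (h3 : a ≠ 3) : pauli a 0 0 = 0 := by
  fin_cases a <;> simp_all [pauli]

lemma sum_pauli_apply_mul_pauli_apply (p q r s : Fin 2) :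
    ∑ a : Fin 4, pauli a p q * pauli a r s = if p = s ∧ q = r then 2 else 0 := by
  fin_cases p <;> fin_cases q <;> fin_cases r <;> fin_cases s <;>
    simp [pauli, Fin.sum_univ_four, Complex.I_mul_I] <;> norm_num

section PauliString

variable {ι κ : Type*} [Fintype ι] [Fintype κ]

lemma pauliString_zero [DecidableEq ι] : pauliString (0 : ι → Fin 4) = 1 := by
  ext x y
  simp only [pauliString, Pi.zero_apply, pauli_zero, one_apply, Fintype.prod_ite_zero,
    Finset.prod_const_one, funext_iff]

lemma pauliString_sumElim_apply (νA : ι → Fin 4) (νB : κ → Fin 4) (a b : ι → Fin 2)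
    (a' b' : κ → Fin 2) :
    pauliString (Sum.elim νA νB) (Sum.elim a a') (Sum.elim b b') =
      pauliString νA a b * pauliString νB a' b' :=
  Fintype.prod_sum_type _

lemma pauliString_apply_zero_zero_eq_zero {ν : ι → Fin 4} (h : ¬ ∀ j, ν j = 0 ∨ ν j = 3) :
    pauliString ν 0 0 = 0 := by
  push Not at h
  obtain ⟨j, hj0, hj3⟩ := h
  exact Finset.prod_eq_zero (Finset.mem_univ j) (pauli_apply_zero_zero_eq_zero hj0 hj3)

lemma sum_pauliString_apply_mul_pauliString_apply [DecidableEq ι] (p q r s : ι → Fin 2) :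
    ∑ ν : ι → Fin 4, pauliString ν p q * pauliString ν r s =
      if p = s ∧ q = r then 2 ^ Fintype.card ι else 0 := by
  simp only [pauliString, ← Finset.prod_mul_distrib]
  rw [← Fintype.prod_sum (fun i a => pauli a (p i) (q i) * pauli a (r i) (s i))]
  simp only [sum_pauli_apply_mul_pauli_apply, Fintype.prod_ite_zero, Finset.prod_const,
    Finset.card_univ, funext_iff, forall_and]

lemma pow_card_mul_apply_eq_sum_trace_mul_pauliString [DecidableEq ι]
    (M : Matrix (ι → Fin 2) (ι → Fin 2) ℂ) (a b : ι → Fin 2) :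
    2 ^ Fintype.card ι * M a b = ∑ ν, (M * pauliString ν).trace * pauliString ν a b := by
  calc 2 ^ Fintype.card ι * M a b
      = ∑ z, ∑ w, M z w * if w = b ∧ z = a then (2 : ℂ) ^ Fintype.card ι else 0 := by
        simp [ite_and, mul_comm]
    _ = ∑ ν, (M * pauliString ν).trace * pauliString ν a b := by
        simp only [← sum_pauliString_apply_mul_pauliString_apply, trace, Matrix.diag, mul_apply,
          Finset.mul_sum, Finset.sum_mul, mul_assoc]
        conv_rhs => rw [Finset.sum_comm]
        refine Finset.sum_congr rfl fun z _ => ?_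
        rw [Finset.sum_comm]

end PauliString

section CodeSpace

variable {ι κ : Type*} [Fintype ι] [Fintype κ] [DecidableEq ι] [DecidableEq κ]

lemma sum_trace_mul_pauliString_apply_sumElim_zero (M : Matrix (ι ⊕ κ → Fin 2) (ι ⊕ κ → Fin 2) ℂ)
    (hM : ∀ (νA : ι → Fin 4) (νB : κ → Fin 4), νA ≠ 0 → (∀ j, νB j = 0 ∨ νB j = 3) →
      (M * pauliString (Sum.elim νA νB)).trace = 0)
    (x y : ι → Fin 2) :
    ∑ ν, (M * pauliString ν).trace * pauliString ν (Sum.elim x 0) (Sum.elim y 0) =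
      if x = y then
        ∑ νB : κ → Fin 4, (M * pauliString (Sum.elim 0 νB)).trace * pauliString νB 0 0
      else 0 := by
  have hvanish : ∀ (νA : ι → Fin 4) (νB : κ → Fin 4), νA ≠ 0 →
      (M * pauliString (Sum.elim νA νB)).trace * pauliString νB 0 0 = 0 := by
    intro νA νB hA
    by_cases hB : ∀ j, νB j = 0 ∨ νB j = 3
    · rw [hM νA νB hA hB, zero_mul]
    · rw [pauliString_apply_zero_zero_eq_zero hB, mul_zero]
  rw [← Fintype.sum_equiv (Equiv.sumArrowEquivProdArrow ι κ (Fin 4)).symm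
    (fun ν => (M * pauliString (Sum.elim ν.1 ν.2)).trace *
      pauliString (Sum.elim ν.1 ν.2) (Sum.elim x 0) (Sum.elim y 0)) _ (fun _ => rfl),
    Fintype.sum_prod_type, Finset.sum_comm]
  simp only [pauliString_sumElim_apply]
  rw [Finset.sum_congr rfl fun νB _ => Finset.sum_eq_single 0
    (fun νA _ hA => by rw [mul_left_comm, hvanish νA νB hA, mul_zero]) (by simp)]
  simp only [pauliString_zero, one_apply]
  split_ifs <;> simp

theorem exists_apply_sumElim_zero_eq_ite_of_trace_mul_pauliString_eq_zero
    (M : Matrix (ι ⊕ κ → Fin 2) (ι ⊕ κ → Fin 2) ℂ)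
    (hM : ∀ (νA : ι → Fin 4) (νB : κ → Fin 4), νA ≠ 0 → (∀ j, νB j = 0 ∨ νB j = 3) →
      (M * pauliString (Sum.elim νA νB)).trace = 0) :
    ∃ c : ℂ, ∀ x y : ι → Fin 2, M (Sum.elim x 0) (Sum.elim y 0) = if x = y then c else 0 := by
  refine ⟨(2 ^ Fintype.card (ι ⊕ κ))⁻¹ *
    ∑ νB : κ → Fin 4, (M * pauliString (Sum.elim 0 νB)).trace * pauliString νB 0 0,
    fun x y => ?_⟩
  have h := pow_card_mul_apply_eq_sum_trace_mul_pauliString M (Sum.elim x 0) (Sum.elim y 0)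
  rw [sum_trace_mul_pauliString_apply_sumElim_zero M hM] at h
  refine mul_left_cancel₀ (pow_ne_zero (Fintype.card (ι ⊕ κ)) two_ne_zero) (h.trans ?_)
  split_ifs <;> simp

end CodeSpace

lemma ketX0_eq_single (x : Fin k → Fin 2) : ketX0 (m := m) x = Pi.single (Sum.elim x 0) 1 := by
  ext z
  simp only [ketX0, Pi.single_apply, funext_iff, Sum.forall, Sum.elim_inl, Sum.elim_inr,
    Pi.zero_apply]

lemma star_codeState_dotProduct_mulVec_codeState
    (U P : Matrix (Fin k ⊕ Fin m → Fin 2) (Fin k ⊕ Fin m → Fin 2) ℂ) (x y : Fin k → Fin 2) :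
    star (codeState U x) ⬝ᵥ P *ᵥ codeState U y =
      (star U * P * U) (Sum.elim x 0) (Sum.elim y 0) := by
  simp only [codeState, ketX0_eq_single, mulVec_mulVec, star_mulVec, dotProduct_mulVec,
    vecMul_vecMul]
  simp [star_eq_conjTranspose, Matrix.mul_assoc]

lemma idProjZero_eq_sum_single :
    (idProjZero : Matrix (Fin k ⊕ Fin m → Fin 2) (Fin k ⊕ Fin m → Fin 2) ℂ) =
      ∑ x : Fin k → Fin 2, single (Sum.elim x 0) (Sum.elim x 0) 1 := by
  ext z w
  have hcode : ∀ x : Fin k → Fin 2, (Sum.elim x 0 = z ∧ Sum.elim x 0 = w) ↔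
      (x = fun i => z (Sum.inl i)) ∧ ((∀ i, z (Sum.inl i) = w (Sum.inl i)) ∧
        (∀ j, z (Sum.inr j) = 0) ∧ ∀ j, w (Sum.inr j) = 0) := by
    intro x
    simp only [funext_iff, Sum.forall, Sum.elim_inl, Sum.elim_inr, Pi.zero_apply]
    grind
  simp only [idProjZero, Matrix.sum_apply, single_apply, hcode, ite_and, Finset.sum_ite_eq',
    Finset.mem_univ, if_true]

lemma trace_mul_idProjZero (N : Matrix (Fin k ⊕ Fin m → Fin 2) (Fin k ⊕ Fin m → Fin 2) ℂ) :
    (N * idProjZero).trace = ∑ x, N (Sum.elim x 0) (Sum.elim x 0) := by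
  simp [idProjZero_eq_sum_single, Matrix.mul_sum, trace_mul_single]

theorem distance_condition_sufficient_general (k m d : ℕ)
    (U : Matrix (Fin k ⊕ Fin m → Fin 2) (Fin k ⊕ Fin m → Fin 2) ℂ)
    (hcond : ∀ (νA : Fin k → Fin 4) (νB : Fin m → Fin 4), νA ≠ 0 →
      (∀ j, νB j = 0 ∨ νB j = 3) →
      ∀ μ : Fin k ⊕ Fin m → Fin 4, 1 ≤ pWeight μ → pWeight μ ≤ d →
        (pauliString μ * (U * pauliString (Sum.elim νA νB) * star U)).trace = 0) :
    ∀ (x y : Fin k → Fin 2) (μ : Fin k ⊕ Fin m → Fin 4),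
      1 ≤ pWeight μ → pWeight μ ≤ d →
      star (codeState U x) ⬝ᵥ (pauliString μ).mulVec (codeState U y) =
        if x = y then
          (2 : ℂ) ^ (-(k : ℤ)) * (pauliString μ * (U * idProjZero * star U)).trace
        else 0 := by
  intro x y μ hμ hμd
  obtain ⟨c, hc⟩ := exists_apply_sumElim_zero_eq_ite_of_trace_mul_pauliString_eq_zero
    (star U * pauliString μ * U) fun νA νB hA hB => by
      rw [← trace_mul_cycle_four]
      exact hcond νA νB hA hB μ hμ hμd
  rw [star_codeState_dotProduct_mulVec_codeState, hc, trace_mul_cycle_four, trace_mul_idProjZero]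
  simp only [hc, if_true, Finset.sum_const, Finset.card_univ, Fintype.card_fun, Fintype.card_fin,
    nsmul_eq_mul]
  split_ifs
  · push_cast
    rw [_root_.zpow_neg, zpow_natCast, inv_mul_cancel_left₀ (pow_ne_zero k two_ne_zero)]
  · rfl

/-- If a Clifford unitary `U` satisfies
`tr[σ_μ U (σ_{ν_A} ⊗ σ_{ν_B}) U†] = 0` for all nonzero `ν_A ∈ {0,1,2,3}^k`, all
`ν_B ∈ {0,3}^m` and all `μ` with `1 ≤ w(μ) ≤ d`, then the code states
`|x̄⟩ = U(|x⟩ ⊗ |0⟩^{⊗m})` satisfy `⟨x̄|σ_μ|ȳ⟩ = C_μ δ_{xy}` with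
`C_μ = 2^{-k} tr[σ_μ U (I ⊗ |0⟩⟨0|^{⊗m}) U†]`. -/
theorem distance_condition_sufficient (k m d : ℕ)
    (U : Matrix (Fin k ⊕ Fin m → Fin 2) (Fin k ⊕ Fin m → Fin 2) ℂ)
    (hU : U ∈ Matrix.unitaryGroup (Fin k ⊕ Fin m → Fin 2) ℂ)
    (hClif : ∀ ν : Fin k ⊕ Fin m → Fin 4, ∃ (μ : Fin k ⊕ Fin m → Fin 4) (ε : ℂ),
      (ε = 1 ∨ ε = -1) ∧ U * pauliString ν * star U = ε • pauliString μ)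
    (hcond : ∀ (νA : Fin k → Fin 4) (νB : Fin m → Fin 4), νA ≠ 0 →
      (∀ j, νB j = 0 ∨ νB j = 3) →
      ∀ μ : Fin k ⊕ Fin m → Fin 4, 1 ≤ pWeight μ → pWeight μ ≤ d →
        (pauliString μ * (U * pauliString (Sum.elim νA νB) * star U)).trace = 0) :
    ∀ (x y : Fin k → Fin 2) (μ : Fin k ⊕ Fin m → Fin 4),
      1 ≤ pWeight μ → pWeight μ ≤ d →
      star (codeState U x) ⬝ᵥ (pauliString μ).mulVec (codeState U y) =
        if x = y then
          (2 : ℂ) ^ (-(k : ℤ)) * (pauliString μ * (U * idProjZero * star U)).trace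
        else 0 :=
  distance_condition_sufficient_general k m d U hcond
end
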